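/- Let K be a type with a zero element (for instance a field) and let f be a Hahn series over K with value group ℚ, so that the support of f is a well-ordered subset of ℚ. Let p ∈ ℚ with p > 1. If the coefficients of f satisfy coeff_s(f) = coeff_{s/p}(f) for every s ∈ ℚ (i.e. f(q) = f(q^p) as fractional q-expansions), then coeff_s(f) = 0 for every s ≠ 0; that is, f is supported at 0. -/
import Mathlib


/-- A Hahn series over `ℚ` (a fractional `q`-expansion) satisfying `f(q) = f(q^p)` for some
rational `p > 1` is supported at `0`. -/
theorem hahnSeries_frobenius_fixed_supported_at_zero (K : Type*) [Zero K]
    (f : HahnSeries ℚ K) (p : ℚ) (hp : 1 < p)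
    (h : ∀ s : ℚ, f.coeff s = f.coeff (s / p)) :
    ∀ s : ℚ, s ≠ 0 → f.coeff s = 0 := by
  have hp0 : (0:ℚ) < p := lt_trans one_pos hp
  intro s hs
  by_contra hne
  have hWF := f.isWF_support
  rw [Set.isWF_iff_no_descending_seq] at hWF
  rcases lt_or_gt_of_ne hs with hneg | hpos
  · -- s < 0 : use s * p^k, strictly decreasing, in support
    have hmem : ∀ k : ℕ, f.coeff (s * p ^ k) = f.coeff s := by
      intro k
      induction k with
      | zero => simp
      | succ n ih =>
        have := h (s * p ^ (n+1))
        rw [this, pow_succ, ← mul_assoc, mul_div_assoc,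
          div_self (ne_of_gt hp0), mul_one, ih]
    exact hWF (fun k => s * p ^ k)
      (fun a b hab => by
        have := pow_lt_pow_right₀ hp hab
        exact (mul_lt_mul_left_of_neg hneg).2 this)
      (fun k => fun hc => hne ((hmem k).symm.trans hc))
  · -- s > 0 : use s / p^k
    have hmem : ∀ k : ℕ, f.coeff (s / p ^ k) = f.coeff s := by
      intro k
      induction k with
      | zero => simp
      | succ n ih =>
        have := h (s / p ^ n)
        rw [← ih, this, div_div, ← pow_succ]
    exact hWF (fun k => s / p ^ k)
      (fun a b hab => by
        have h1 := pow_lt_pow_right₀ hp hab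
        exact div_lt_div_of_pos_left hpos (pow_pos hp0 a) h1)
      (fun k => fun hc => hne ((hmem k).symm.trans hc))
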